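/- arXiv:1611.04148 — 9 statements merged into one kernel-verified Lean document; each statement's English description precedes it below -/
import Mathlib

section
/- Let d ≥ 2 and let A ∈ ℝ^{d×d} be a matrix whose tropical diameter equals 2, i.e., tdiam(A) = 2. Then the max-tropical volume of A does not exceed 2, i.e., tvol(A) ≤ 2. -/
open scoped BigOperators

/-- Tropical distance between two points of `ℝ^d`. -/
noncomputable def tdist {d : ℕ} (v w : Fin d → ℝ) : ℝ :=
  (⨆ i, (v i - w i)) - ⨅ i, (v i - w i)

/-- Tropical diameter of a square matrix: maximal tropical distance between rows. -/
noncomputable def tdiam {d : ℕ} (A : Matrix (Fin d) (Fin d) ℝ) : ℝ :=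
  ⨆ i, ⨆ j, tdist (A i) (A j)

/-- `A|σ = Σ_i a_{i,σ(i)}`. -/
noncomputable def permSum {d : ℕ} (A : Matrix (Fin d) (Fin d) ℝ) (σ : Equiv.Perm (Fin d)) : ℝ :=
  ∑ i, A i (σ i)

/-- Max-tropical determinant. -/
noncomputable def tdet {d : ℕ} (A : Matrix (Fin d) (Fin d) ℝ) : ℝ :=
  ⨆ σ : Equiv.Perm (Fin d), permSum A σ

/-- Max-tropical volume computed with respect to a permutation `σ₀` attaining the
tropical determinant (the value does not depend on this choice). -/
noncomputable def tvolWith {d : ℕ} (A : Matrix (Fin d) (Fin d) ℝ)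
    (σ₀ : Equiv.Perm (Fin d)) : ℝ :=
  tdet A - ⨆ τ : {τ : Equiv.Perm (Fin d) // τ ≠ σ₀}, permSum A (τ : Equiv.Perm (Fin d))

/-- A matrix is max-standard if the identity permutation attains the tropical
determinant and the first row and column read `(1,0,0,…,0)`. -/
def IsMaxStandard {d : ℕ} [NeZero d] (A : Matrix (Fin d) (Fin d) ℝ) : Prop :=
  permSum A 1 = tdet A ∧
    (∀ j, A 0 j = if j = 0 then 1 else 0) ∧
    (∀ i, A i 0 = if i = 0 then 1 else 0)

/-- tropical isodiametric inequality, first part.  If `tdiam A = 2`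
then the max-tropical volume of `A` does not exceed `2`. -/
theorem tropical_isodiametric_ineq (d : ℕ) (hd : 2 ≤ d)
    (A : Matrix (Fin d) (Fin d) ℝ) (hdiam : tdiam A = 2)
    (σ₀ : Equiv.Perm (Fin d)) (hσ₀ : permSum A σ₀ = tdet A) :
    tvolWith A σ₀ ≤ 2 := by
  set i0 : Fin d := ⟨0, by omega⟩ with hi0
  set i1 : Fin d := ⟨1, by omega⟩ with hi1
  have h01 : i0 ≠ i1 := by simp [hi0, hi1, Fin.ext_iff]
  set τ : Equiv.Perm (Fin d) := σ₀ * Equiv.swap i0 i1 with hτdef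
  have hτne : τ ≠ σ₀ := by
    intro h
    have := congrArg (fun e : Equiv.Perm (Fin d) => e i0) h
    simp [hτdef, Equiv.swap_apply_left] at this
    exact h01 this.symm
  -- key distance bound
  have hdistle : tdist (A i0) (A i1) ≤ 2 := by
    rw [← hdiam, tdiam]
    have h1 : tdist (A i0) (A i1) ≤ ⨆ j, tdist (A i0) (A j) :=
      le_ciSup (f := fun j => tdist (A i0) (A j)) (Finite.bddAbove_range _) i1
    exact h1.trans (le_ciSup (f := fun i => ⨆ j, tdist (A i) (A j)) (Finite.bddAbove_range _) i0)
  have hkey : A i0 (σ₀ i0) + A i1 (σ₀ i1) - A i0 (σ₀ i1) - A i1 (σ₀ i0) ≤ 2 := by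
    have hs : A i0 (σ₀ i0) - A i1 (σ₀ i0) ≤ ⨆ i, (A i0 i - A i1 i) :=
      le_ciSup (f := fun i => A i0 i - A i1 i) (Finite.bddAbove_range _) (σ₀ i0)
    have hi : (⨅ i, (A i0 i - A i1 i)) ≤ A i0 (σ₀ i1) - A i1 (σ₀ i1) :=
      ciInf_le (f := fun i => A i0 i - A i1 i) (Finite.bddBelow_range _) (σ₀ i1)
    have := hdistle
    rw [tdist] at this
    linarith
  have hsum : permSum A σ₀ - permSum A τ ≤ 2 := by
    have hdiff : permSum A σ₀ - permSum A τ
        = ∑ k, (A k (σ₀ k) - A k (τ k)) := by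
      rw [permSum, permSum, Finset.sum_sub_distrib]
    have hzero : ∀ k ∈ Finset.univ, k ∉ ({i0, i1} : Finset (Fin d)) →
        A k (σ₀ k) - A k (τ k) = 0 := by
      intro k _ hk
      simp only [Finset.mem_insert, Finset.mem_singleton, not_or] at hk
      have : τ k = σ₀ k := by
        simp [hτdef, Equiv.swap_apply_of_ne_of_ne hk.1 hk.2]
      rw [this]; ring
    have hsub : ∑ k, (A k (σ₀ k) - A k (τ k))
        = ∑ k ∈ ({i0, i1} : Finset (Fin d)), (A k (σ₀ k) - A k (τ k)) :=
      (Finset.sum_subset (Finset.subset_univ _) hzero).symm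
    have hpair : ∑ k ∈ ({i0, i1} : Finset (Fin d)), (A k (σ₀ k) - A k (τ k))
        = (A i0 (σ₀ i0) - A i0 (τ i0)) + (A i1 (σ₀ i1) - A i1 (τ i1)) :=
      Finset.sum_pair h01
    have hτ0 : τ i0 = σ₀ i1 := by simp [hτdef, Equiv.swap_apply_left]
    have hτ1 : τ i1 = σ₀ i0 := by simp [hτdef, Equiv.swap_apply_right]
    rw [hdiff, hsub, hpair, hτ0, hτ1]
    linarith
  have hτle : permSum A τ ≤ ⨆ τ' : {τ' : Equiv.Perm (Fin d) // τ' ≠ σ₀},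
      permSum A (τ' : Equiv.Perm (Fin d)) :=
    le_ciSup (f := fun τ' : {τ' : Equiv.Perm (Fin d) // τ' ≠ σ₀} => permSum A (τ' : Equiv.Perm (Fin d)))
      (Finite.bddAbove_range _) ⟨τ, hτne⟩
  rw [tvolWith, ← hσ₀]
  linarith
end

section
/- Let d ≥ 2 and let A = (a_{ij}) ∈ ℝ^{d×d} be a max-standard matrix with tdiam(A) = 2 and tvol(A) ≥ 2. Then the coefficients of A satisfy: (i) −1 ≤ a_{ij} ≤ 1 for all i,j; (ii) a_{ii} = 1 for all i; (iii) a_{ji} = −a_{ij} for all i ≠ j; and (iv) −1 ≤ a_{ij} + a_{jk} + a_{ki} ≤ 1 for all pairwise distinct i,j,k. -/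
open scoped BigOperators

/-- a max-standard matrix with tropical diameter `2` and tropical
volume at least `2` satisfies the conditions (i)–(iv) of the tropical
isodiametric inequality.  (Since `A` is max-standard, the identity permutation
attains the tropical determinant, so the tropical volume is `tvolWith A 1`.) -/
theorem maxStandard_isodiametric_conditions (d : ℕ) [NeZero d] (hd : 2 ≤ d)
    (A : Matrix (Fin d) (Fin d) ℝ)
    (hstd : IsMaxStandard A) (hdiam : tdiam A = 2)
    (hvol : 2 ≤ tvolWith A 1) :
    (∀ i j, -1 ≤ A i j ∧ A i j ≤ 1) ∧
    (∀ i, A i i = 1) ∧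
    (∀ i j, i ≠ j → A j i = -A i j) ∧
    (∀ i j k, i ≠ j → j ≠ k → i ≠ k →
      -1 ≤ A i j + A j k + A k i ∧ A i j + A j k + A k i ≤ 1) := by
  obtain ⟨hdet, hrow, hcol⟩ := hstd
  -- every non-identity permutation sum is at most permSum A 1 - 2
  have key1 : ∀ τ : Equiv.Perm (Fin d), τ ≠ 1 → permSum A τ + 2 ≤ permSum A 1 := by
    intro τ hτ
    have h1 : permSum A τ ≤ ⨆ τ' : {τ' : Equiv.Perm (Fin d) // τ' ≠ 1}, permSum A (τ' : Equiv.Perm (Fin d)) :=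
      le_ciSup (f := fun τ' : {τ' : Equiv.Perm (Fin d) // τ' ≠ 1} => permSum A (τ' : Equiv.Perm (Fin d)))
        (Set.Finite.bddAbove (Set.finite_range _)) ⟨τ, hτ⟩
    have h2 := hvol
    unfold tvolWith at h2
    rw [← hdet] at h2
    linarith
  -- from the diameter bound
  have key2 : ∀ i j k l : Fin d, (A i k - A j k) - (A i l - A j l) ≤ 2 := by
    intro i j k l
    have h1 : tdist (A i) (A j) ≤ tdiam A := by
      refine le_trans (le_ciSup (f := fun j' => tdist (A i) (A j'))
        (Set.Finite.bddAbove (Set.finite_range _)) j)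
        (le_ciSup (f := fun i' => ⨆ j', tdist (A i') (A j'))
        (Set.Finite.bddAbove (Set.finite_range _)) i)
    have h2 : A i k - A j k ≤ ⨆ m, (A i m - A j m) :=
      le_ciSup (f := fun m => A i m - A j m) (Set.Finite.bddAbove (Set.finite_range _)) k
    have h3 : (⨅ m, (A i m - A j m)) ≤ A i l - A j l :=
      ciInf_le (f := fun m => A i m - A j m) (Set.Finite.bddBelow (Set.finite_range _)) l
    unfold tdist at h1
    rw [hdiam] at h1
    linarith
  -- transposition inequality
  have hswap : ∀ i j : Fin d, i ≠ j → A i j + A j i + 2 ≤ A i i + A j j := by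
    intro i j hij
    have hne : Equiv.swap i j ≠ 1 := by
      intro h
      have : Equiv.swap i j i = (1 : Equiv.Perm (Fin d)) i := by rw [h]
      simp [Equiv.swap_apply_left] at this
      exact hij this.symm
    have h := key1 (Equiv.swap i j) hne
    have hdiff : permSum A 1 - permSum A (Equiv.swap i j)
        = (A i i + A j j) - (A i j + A j i) := by
      unfold permSum
      rw [← Finset.sum_sub_distrib]
      have hz : ∀ m ∈ Finset.univ, m ∉ ({i, j} : Finset (Fin d)) →
          A m ((1 : Equiv.Perm (Fin d)) m) - A m (Equiv.swap i j m) = 0 := by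
        intro m _ hm
        simp only [Finset.mem_insert, Finset.mem_singleton, not_or] at hm
        rw [Equiv.swap_apply_of_ne_of_ne hm.1 hm.2]
        simp
      rw [← Finset.sum_subset (Finset.subset_univ ({i, j} : Finset (Fin d))) hz]
      rw [Finset.sum_pair hij]
      simp [Equiv.swap_apply_left, Equiv.swap_apply_right]
      ring
    linarith
  -- 3-cycle inequality
  have hcycle : ∀ i j k : Fin d, i ≠ j → j ≠ k → i ≠ k →
      A i j + A j k + A k i + 2 ≤ A i i + A j j + A k k := by
    intro i j k hij hjk hik
    set c : Equiv.Perm (Fin d) := Equiv.swap i k * Equiv.swap i j with hc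
    have hci : c i = j := by
      simp [hc, Equiv.Perm.mul_apply, Equiv.swap_apply_left,
        Equiv.swap_apply_of_ne_of_ne hij.symm hjk]
    have hcj : c j = k := by
      simp [hc, Equiv.Perm.mul_apply, Equiv.swap_apply_right, Equiv.swap_apply_left]
    have hck : c k = i := by
      simp [hc, Equiv.Perm.mul_apply, Equiv.swap_apply_of_ne_of_ne hik.symm hjk.symm,
        Equiv.swap_apply_right]
    have hne : c ≠ 1 := by
      intro h
      have : c i = i := by rw [h]; rfl
      rw [hci] at this
      exact hij this.symm
    have h := key1 c hne
    have hdiff : permSum A 1 - permSum A c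
        = (A i i + A j j + A k k) - (A i j + A j k + A k i) := by
      unfold permSum
      rw [← Finset.sum_sub_distrib]
      have hz : ∀ m ∈ Finset.univ, m ∉ ({i, j, k} : Finset (Fin d)) →
          A m ((1 : Equiv.Perm (Fin d)) m) - A m (c m) = 0 := by
        intro m _ hm
        simp only [Finset.mem_insert, Finset.mem_singleton, not_or] at hm
        have : c m = m := by
          simp [hc, Equiv.Perm.mul_apply,
            Equiv.swap_apply_of_ne_of_ne hm.1 hm.2.1,
            Equiv.swap_apply_of_ne_of_ne hm.1 hm.2.2]
        rw [this]
        simp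
      rw [← Finset.sum_subset (Finset.subset_univ ({i, j, k} : Finset (Fin d))) hz]
      have hmem1 : i ∉ ({j, k} : Finset (Fin d)) := by simp [hij, hik]
      have hmem2 : j ∉ ({k} : Finset (Fin d)) := by simp [hjk]
      rw [show ({i, j, k} : Finset (Fin d)) = insert i {j, k} from rfl,
        Finset.sum_insert hmem1, show ({j, k} : Finset (Fin d)) = insert j {k} from rfl,
        Finset.sum_insert hmem2, Finset.sum_singleton]
      rw [hci, hcj, hck]
      simp
      ring
    linarith
  -- entries of first row/column
  have hr0 : ∀ j : Fin d, j ≠ 0 → A 0 j = 0 := by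
    intro j hj; rw [hrow j]; simp [hj]
  have hc0 : ∀ i : Fin d, i ≠ 0 → A i 0 = 0 := by
    intro i hi; rw [hcol i]; simp [hi]
  have h00 : A 0 0 = 1 := by rw [hrow 0]; simp
  -- upper bound for off-corner entries
  have hub' : ∀ i j : Fin d, i ≠ 0 → j ≠ 0 → A i j ≤ 1 := by
    intro i j hi hj
    have h := key2 i 0 j 0
    rw [hr0 j hj, hc0 i hi, h00] at h
    linarith
  -- diagonal entries
  have hdiag : ∀ i : Fin d, A i i = 1 := by
    intro i
    by_cases hi : i = 0
    · rw [hi]; exact h00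
    · have h1 := hswap 0 i (Ne.symm hi)
      rw [hr0 i hi, hc0 i hi, h00] at h1
      have h2 := hub' i i hi hi
      linarith
  -- upper bound for all entries
  have hub : ∀ i j : Fin d, A i j ≤ 1 := by
    intro i j
    by_cases hi : i = 0
    · subst hi; rw [hrow j]; split <;> norm_num
    · by_cases hj : j = 0
      · subst hj; rw [hcol i]; split <;> norm_num
      · exact hub' i j hi hj
  -- lower bound for all entries
  have hlb : ∀ i j : Fin d, -1 ≤ A i j := by
    intro i j
    by_cases hi : i = 0
    · subst hi; rw [hrow j]; split <;> norm_num
    · by_cases hj : j = 0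
      · subst hj; rw [hcol i]; split <;> norm_num
      · have h := key2 i 0 i j
        rw [hr0 i hi, hr0 j hj, hdiag i] at h
        linarith
  -- antisymmetry
  have hanti : ∀ i j : Fin d, i ≠ j → A j i = -A i j := by
    intro i j hij
    have h1 := hswap i j hij
    rw [hdiag i, hdiag j] at h1
    have h2 := key2 i j i j
    rw [hdiag i, hdiag j] at h2
    linarith
  refine ⟨fun i j => ⟨hlb i j, hub i j⟩, hdiag, hanti, ?_⟩
  intro i j k hij hjk hik
  constructor
  · have h := hcycle i k j hik (Ne.symm hjk) hij
    rw [hdiag i, hdiag j, hdiag k, hanti k i hik.symm, hanti j k hjk,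
      hanti i j hij] at h
    linarith
  · have h := hcycle i j k hij hjk hik
    rw [hdiag i, hdiag j, hdiag k] at h
    linarith
end

section
/- Let d ≥ 2 and let A = (a_{ij}) ∈ ℝ^{d×d} be a max-standard matrix whose coefficients satisfy: (i) −1 ≤ a_{ij} ≤ 1 for all i,j; (ii) a_{ii} = 1 for all i; (iii) a_{ji} = −a_{ij} for all i ≠ j; and (iv) −1 ≤ a_{ij} + a_{jk} + a_{ki} ≤ 1 for all pairwise distinct i,j,k. Then both the tropical diameter and the max-tropical volume of A equal 2, i.e., tdiam(A) = 2 and tvol(A) = 2. -/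
open scoped BigOperators

/-- A sum over `Fin d` of a function vanishing outside `{i, j}`. -/
lemma two_term_sum {d : ℕ} (f : Fin d → ℝ) (i j : Fin d) (hij : i ≠ j)
    (h0 : ∀ x, x ≠ i → x ≠ j → f x = 0) : ∑ x, f x = f i + f j := by
  rw [← Finset.sum_pair hij]
  refine (Finset.sum_subset (Finset.subset_univ _) ?_).symm
  intro x _ hx
  simp only [Finset.mem_insert, Finset.mem_singleton, not_or] at hx
  exact h0 x hx.1 hx.2

lemma permSum_le_card {d : ℕ} (A : Matrix (Fin d) (Fin d) ℝ)
    (h1 : ∀ i j, A i j ≤ 1) (σ : Equiv.Perm (Fin d)) : permSum A σ ≤ d := by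
  calc permSum A σ ≤ ∑ _i : Fin d, (1 : ℝ) := Finset.sum_le_sum fun i _ => h1 i (σ i)
  _ = d := by simp

lemma permSum_ne_one_le {d : ℕ} (A : Matrix (Fin d) (Fin d) ℝ)
    (h1 : ∀ i j, A i j ≤ 1) (h2 : ∀ i, A i i = 1)
    (h3 : ∀ i j, i ≠ j → A j i = -A i j)
    (h4 : ∀ i j k, i ≠ j → j ≠ k → i ≠ k → A i j + A j k + A k i ≤ 1) :
    ∀ n (τ : Equiv.Perm (Fin d)), τ.support.card ≤ n → τ ≠ 1 → permSum A τ ≤ (d : ℝ) - 2 := by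
  intro n
  induction n with
  | zero =>
    intro τ hcard hτ
    exact absurd (Equiv.Perm.support_eq_empty_iff.mp (Finset.card_eq_zero.mp
      (Nat.le_zero.mp hcard))) hτ
  | succ n ih =>
    intro τ hcard hτ
    obtain ⟨i, hi⟩ : ∃ i, τ i ≠ i := by
      by_contra h
      push_neg at h
      exact hτ (Equiv.ext h)
    obtain ⟨j, hj⟩ : ∃ j, τ i = j := ⟨τ i, rfl⟩
    have hij : i ≠ j := fun h => hi (hj.trans h.symm)
    set τ' := τ * Equiv.swap i j with hτ'
    have hτ'i : τ' i = τ j := by simp [hτ', Equiv.swap_apply_left]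
    have hτ'j : τ' j = j := by simp [hτ', Equiv.swap_apply_right, hj]
    have hτ'x : ∀ x, x ≠ i → x ≠ j → τ' x = τ x := by
      intro x hxi hxj
      simp [hτ', Equiv.swap_apply_of_ne_of_ne hxi hxj]
    have hdiff : permSum A τ - permSum A τ'
        = (A i (τ i) - A i (τ' i)) + (A j (τ j) - A j (τ' j)) := by
      rw [permSum, permSum, ← Finset.sum_sub_distrib]
      exact two_term_sum _ i j hij fun x hxi hxj => by rw [hτ'x x hxi hxj, sub_self]
    by_cases hji : τ j = i
    · rw [hτ'i, hτ'j, hji, hj, h2 j, h3 i j hij, h2 i] at hdiff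
      linarith [permSum_le_card A h1 τ']
    · obtain ⟨k, hk⟩ : ∃ k, τ j = k := ⟨τ j, rfl⟩
      have hki : k ≠ i := fun h => hji (hk.trans h)
      have hkj : k ≠ j := fun h => hij (τ.injective (hj.trans (h ▸ hk).symm))
      rw [hτ'i, hτ'j, hj, hk, h2 j] at hdiff
      have htri := h4 i j k hij (Ne.symm hkj) (Ne.symm hki)
      have hki' := h3 i k (Ne.symm hki)
      have hle : permSum A τ ≤ permSum A τ' := by linarith
      have hτ'1 : τ' ≠ 1 := by
        intro h
        have hfix : τ' i = i := by rw [h]; rfl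
        rw [hτ'i, hk] at hfix
        exact hki hfix
      have hsub : τ'.support ⊆ τ.support.erase j := by
        intro x hx
        rw [Equiv.Perm.mem_support] at hx
        have hxj : x ≠ j := by
          intro h; rw [h, hτ'j] at hx; exact hx rfl
        rw [Finset.mem_erase, Equiv.Perm.mem_support]
        refine ⟨hxj, ?_⟩
        by_cases hxi : x = i
        · subst hxi; rw [hj]; exact Ne.symm hij
        · rw [← hτ'x x hxi hxj]; exact hx
      have hjmem : j ∈ τ.support := by
        rw [Equiv.Perm.mem_support, hk]; exact hkj
      have hcard' : τ'.support.card ≤ n := by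
        have h1' := Finset.card_le_card hsub
        have h2' := Finset.card_erase_of_mem hjmem
        omega
      linarith [ih τ' hcard' hτ'1]

/-- conversely, any max-standard matrix satisfying the conditions
(i)–(iv) has tropical diameter `2` and max-tropical volume `2`.  (Since `A` is
max-standard, the identity permutation attains the tropical determinant, so the
tropical volume is `tvolWith A 1`.) -/
theorem maxStandard_conditions_imply_isodiametric (d : ℕ) [NeZero d] (hd : 2 ≤ d)
    (A : Matrix (Fin d) (Fin d) ℝ)
    (hstd : IsMaxStandard A)
    (h1 : ∀ i j, -1 ≤ A i j ∧ A i j ≤ 1)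
    (h2 : ∀ i, A i i = 1)
    (h3 : ∀ i j, i ≠ j → A j i = -A i j)
    (h4 : ∀ i j k, i ≠ j → j ≠ k → i ≠ k →
      -1 ≤ A i j + A j k + A k i ∧ A i j + A j k + A k i ≤ 1) :
    tdiam A = 2 ∧ tvolWith A 1 = 2 := by
  obtain ⟨h1a, h1b⟩ : (∀ i j, -1 ≤ A i j) ∧ (∀ i j, A i j ≤ 1) :=
    ⟨fun i j => (h1 i j).1, fun i j => (h1 i j).2⟩
  set e1 : Fin d := ⟨1, by omega⟩ with he1
  have h01 : (0 : Fin d) ≠ e1 := by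
    simp [he1, Fin.ext_iff]
  have hA01 : A 0 e1 = 0 := by
    rw [hstd.2.1 e1, if_neg (Ne.symm h01)]
  have hA10 : A e1 0 = 0 := by
    rw [hstd.2.2 e1, if_neg (Ne.symm h01)]
  -- the key pointwise bound
  have claim : ∀ i j k : Fin d, A i k - A j k ≤ 1 + A i j := by
    intro i j k
    rcases eq_or_ne i j with rfl | hij
    · linarith [h1a i i, h2 i]
    rcases eq_or_ne k i with rfl | hki
    · rw [h2 k, h3 k j hij]
      linarith
    rcases eq_or_ne k j with rfl | hkj
    · rw [h2 k]; linarith [h1a i k]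
    · have hik : i ≠ k := Ne.symm hki
      have hjk : j ≠ k := Ne.symm hkj
      have htri := (h4 j i k (Ne.symm hij) hik hjk).2
      have e1' := h3 i j hij
      have e2' := h3 j k (Ne.symm hkj)
      linarith
  -- tropical distances
  have hdist_le : ∀ i j : Fin d, tdist (A i) (A j) ≤ 2 := by
    intro i j
    rcases eq_or_ne i j with rfl | hij
    · have : tdist (A i) (A i) = 0 := by
        simp [tdist, ciSup_const, ciInf_const]
      linarith
    · have hsup : (⨆ k, (A i k - A j k)) ≤ 1 + A i j :=
        ciSup_le fun k => claim i j k
      have hinf : (A i j - 1 : ℝ) ≤ ⨅ k, (A i k - A j k) := by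
        refine le_ciInf fun k => ?_
        have := claim j i k
        rw [h3 i j hij] at this
        linarith
      have hji' := h3 i j hij
      rw [tdist]
      linarith
  have hdist01 : tdist (A 0) (A e1) = 2 := by
    have hsup : (⨆ k, (A 0 k - A e1 k)) = 1 := by
      apply le_antisymm
      · refine ciSup_le fun k => ?_
        have := claim 0 e1 k
        rw [hA01] at this
        linarith
      · have h0' : A 0 0 - A e1 0 = 1 := by rw [hstd.2.1 0, if_pos rfl, hA10]; ring
        calc (1:ℝ) = A 0 0 - A e1 0 := h0'.symm
        _ ≤ ⨆ k, (A 0 k - A e1 k) := le_ciSup (f := fun k => A 0 k - A e1 k) (Finite.bddAbove_range _) 0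
    have hinf : (⨅ k, (A 0 k - A e1 k)) = -1 := by
      apply le_antisymm
      · have h1' : A 0 e1 - A e1 e1 = -1 := by rw [hA01, h2 e1]; ring
        calc (⨅ k, (A 0 k - A e1 k)) ≤ A 0 e1 - A e1 e1 :=
              ciInf_le (Finite.bddBelow_range _) e1
        _ = -1 := h1'
      · refine le_ciInf fun k => ?_
        have := claim e1 0 k
        rw [hA10] at this
        linarith
    rw [tdist, hsup, hinf]
    ring
  have htdiam : tdiam A = 2 := by
    apply le_antisymm
    · exact ciSup_le fun i => ciSup_le fun j => hdist_le i j
    · calc (2:ℝ) = tdist (A 0) (A e1) := hdist01.symm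
      _ ≤ ⨆ j, tdist (A 0) (A j) := le_ciSup (f := fun j => tdist (A 0) (A j)) (Finite.bddAbove_range _) e1
      _ ≤ tdiam A := le_ciSup (Finite.bddAbove_range fun i => ⨆ j, tdist (A i) (A j)) 0
  -- tropical determinant
  have hperm1 : permSum A 1 = d := by
    rw [permSum]
    simp [h2]
  have htdet : tdet A = d := by rw [← hstd.1, hperm1]
  -- the second-best permutation value
  have hσb : permSum A (Equiv.swap 0 e1) = (d : ℝ) - 2 := by
    have hdiff : permSum A (Equiv.swap 0 e1) - permSum A 1
        = (A 0 (Equiv.swap 0 e1 0) - A 0 0) + (A e1 (Equiv.swap 0 e1 e1) - A e1 e1) := by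
      rw [permSum, permSum, ← Finset.sum_sub_distrib]
      refine two_term_sum _ 0 e1 h01 fun x hx0 hx1 => ?_
      rw [Equiv.swap_apply_of_ne_of_ne hx0 hx1, Equiv.Perm.one_apply, sub_self]
    rw [Equiv.swap_apply_left, Equiv.swap_apply_right, hA01, hA10, h2 0, h2 e1, hperm1]
      at hdiff
    linarith
  have hswap_ne : Equiv.swap 0 e1 ≠ (1 : Equiv.Perm (Fin d)) := by
    rw [Ne, Equiv.swap_eq_one_iff]
    exact h01
  have hne : Nonempty {τ : Equiv.Perm (Fin d) // τ ≠ 1} := ⟨⟨_, hswap_ne⟩⟩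
  have hsup2 : (⨆ τ : {τ : Equiv.Perm (Fin d) // τ ≠ 1},
      permSum A (τ : Equiv.Perm (Fin d))) = (d : ℝ) - 2 := by
    apply le_antisymm
    · exact ciSup_le fun τ =>
        permSum_ne_one_le A h1b h2 h3 (fun i j k hij hjk hik => (h4 i j k hij hjk hik).2)
          (τ : Equiv.Perm (Fin d)).support.card _ le_rfl τ.2
    · calc ((d : ℝ) - 2) = permSum A (Equiv.swap 0 e1) := hσb.symm
      _ ≤ _ := le_ciSup (f := fun τ : {τ : Equiv.Perm (Fin d) // τ ≠ 1} => permSum A (τ : Equiv.Perm (Fin d)))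
            (Finite.bddAbove_range _) ⟨_, hswap_ne⟩
  refine ⟨htdiam, ?_⟩
  rw [tvolWith, htdet, hsup2]
  ring
end

section
/- Let A = (a_{ij}) ∈ ℝ^{d×d} satisfy a_{ji} = −a_{ij} for all i ≠ j and −1 ≤ a_{ij} + a_{jk} + a_{ki} ≤ 1 for all pairwise distinct i,j,k. Then for every ℓ ≥ 3 and every sequence of pairwise distinct indices i_1, i_2, …, i_ℓ ∈ [d], the cyclic sum satisfies a_{i_1 i_2} + a_{i_2 i_3} + ⋯ + a_{i_{ℓ−1} i_ℓ} + a_{i_ℓ i_1} ≤ ℓ − 2. -/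
/-!
Cut the cycle `i₁ → ⋯ → i_ℓ → i₁` open into the path `i₁ → ⋯ → i_ℓ`. By induction on its
length, a path through distinct vertices has weight at most `(length - 1) + a_{i₁ i_ℓ}`:
appending a vertex `q` after `p` trades the chord `a_{i₁ p}` for
`a_{i₁ p} + a_{p q} ≤ 1 + a_{i₁ q}`, which is the triangle bound on `(i₁, p, q)` together with
skew-symmetry. Closing the path with the edge `a_{i_ℓ i₁} = -a_{i₁ i_ℓ}` then gives `ℓ - 2`.
-/

namespace CyclicSum

variable {ι : Type*} (a : ι → ι → ℝ)

def pathSum {n : ℕ} (f : Fin (n + 1) → ι) : ℝ :=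
  ∑ i : Fin n, a (f i.castSucc) (f i.succ)

theorem pathSum_snoc {n : ℕ} (f : Fin (n + 2) → ι) :
    pathSum a f =
      pathSum a (f ∘ Fin.castSucc) + a (f (Fin.last n).castSucc) (f (Fin.last (n + 1))) := by
  simp only [pathSum, Fin.sum_univ_castSucc (n := n), Function.comp_apply, Fin.succ_castSucc,
    Fin.succ_last]

theorem sum_finRotate_eq_pathSum_add {n : ℕ} (f : Fin (n + 1) → ι) :
    ∑ m : Fin (n + 1), a (f m) (f (finRotate (n + 1) m)) =
      pathSum a f + a (f (Fin.last n)) (f 0) := by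
  simp only [pathSum, Fin.sum_univ_castSucc (n := n), finRotate_apply, Fin.coeSucc_eq_succ,
    Fin.last_add_one]

variable {a}

theorem pathSum_le (hskew : ∀ i j, i ≠ j → a j i = -a i j)
    (htriple : ∀ i j k, i ≠ j → j ≠ k → i ≠ k → a i j + a j k + a k i ≤ 1)
    {n : ℕ} (hn : 1 ≤ n) {f : Fin (n + 1) → ι} (hf : Function.Injective f) :
    pathSum a f ≤ (n : ℝ) - 1 + a (f 0) (f (Fin.last n)) := by
  induction n, hn using Nat.le_induction with
  | base => simp [pathSum]
  | succ n hn ih =>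
    set p := f (Fin.last n).castSucc
    set q := f (Fin.last (n + 1))
    have hinit := ih (hf.comp (Fin.castSucc_injective _))
    have h0p : f 0 ≠ p := hf.ne (Fin.ext_iff.not.2 (by simp; omega))
    have hpq : p ≠ q := hf.ne (Fin.ext_iff.not.2 (by simp))
    have h0q : f 0 ≠ q := hf.ne (Fin.ext_iff.not.2 (by simp))
    have hchord : a (f 0) p + a p q ≤ 1 + a (f 0) q := by
      linarith [htriple (f 0) p q h0p hpq h0q, hskew (f 0) q h0q]
    rw [pathSum_snoc]
    simp only [Function.comp_apply, Fin.castSucc_zero] at hinit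
    push_cast
    linarith

end CyclicSum

open CyclicSum in
/-- for a matrix with `a_{ji} = -a_{ij}` (off-diagonal) and
`-1 ≤ a_{ij} + a_{jk} + a_{ki} ≤ 1` for pairwise distinct indices, every cyclic
sum along `ℓ ≥ 3` pairwise distinct indices is at most `ℓ - 2`.
The indices `i_1,…,i_ℓ` are encoded as an injective map `f : Fin ℓ → Fin d`,
and `finRotate ℓ` is the cyclic successor `m ↦ m + 1` on `Fin ℓ`. -/
theorem cyclic_sum_le (d : ℕ) (A : Matrix (Fin d) (Fin d) ℝ)
    (hskew : ∀ i j, i ≠ j → A j i = -A i j)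
    (htriple : ∀ i j k, i ≠ j → j ≠ k → i ≠ k →
      -1 ≤ A i j + A j k + A k i ∧ A i j + A j k + A k i ≤ 1)
    (ℓ : ℕ) (hℓ : 3 ≤ ℓ) (f : Fin ℓ → Fin d) (hf : Function.Injective f) :
    ∑ m : Fin ℓ, A (f m) (f (finRotate ℓ m)) ≤ (ℓ : ℝ) - 2 := by
  obtain ⟨n, rfl⟩ : ∃ n, ℓ = n + 1 := ⟨ℓ - 1, by omega⟩
  have hpath := pathSum_le hskew (fun i j k hij hjk hik => (htriple i j k hij hjk hik).2)
    (by omega) hf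
  have hclose := hskew (f 0) (f (Fin.last n)) (hf.ne (Fin.ext_iff.not.2 (by simp; omega)))
  have hcycle := sum_finRotate_eq_pathSum_add A f
  push_cast
  linarith
end

section
/- Let A = (a_{ij}) ∈ ℝ^{d×d} satisfy a_{ii} = 1 for all i, a_{ji} = −a_{ij} for all i ≠ j, and −1 ≤ a_{ij} + a_{jk} + a_{ki} ≤ 1 for all pairwise distinct i,j,k. Then for every permutation σ of [d], writing k for the number of cycles of σ of length at least 2 (so k = 0 iff σ is the identity), one has Σ_{i∈[d]} a_{i,σ(i)} ≤ d − 2k. -/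
/-!
Skew-symmetry turns the upper bound on the three-term sums into the relaxed triangle inequality
`A i j + A j k ≤ 1 + A i k` for distinct `i, j, k`. Chaining this along a
cycle `x₀ → x₁ → ⋯ → x_{m-1} → x₀` of length `m ≥ 2` bounds the sum along the path
`x₀ → ⋯ → x_{m-1}` by `m - 2 + A x₀ x_{m-1}`, and the closing edge contributes
`A x_{m-1} x₀ = -A x₀ x_{m-1}`; so each nontrivial cycle of length `m` contributes at most
`m - 2`, while each fixed point contributes the diagonal entry `1`.
-/

open Finset

namespace Equiv.Perm

variable {ι M : Type*} [DecidableEq ι] [Fintype ι] [AddCommMonoid M]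

theorem sum_support_mul_of_disjoint {σ τ : Perm ι} (h : σ.Disjoint τ) (f : ι → ι → M) :
    ∑ i ∈ (σ * τ).support, f i ((σ * τ) i) =
      ∑ i ∈ σ.support, f i (σ i) + ∑ i ∈ τ.support, f i (τ i) := by
  rw [h.support_mul, sum_union h.disjoint_support]
  congr 1 <;> refine sum_congr rfl fun i hi => ?_
  · have hτ : τ i = i := notMem_support.1 (disjoint_left.1 h.disjoint_support hi)
    rw [mul_apply, hτ]
  · have hσ : σ (τ i) = τ i :=
      notMem_support.1 (disjoint_right.1 h.disjoint_support (apply_mem_support.2 hi))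
    rw [mul_apply, hσ]

end Equiv.Perm

namespace Matrix

variable {ι : Type*} {A : Matrix ι ι ℝ}

theorem sum_consecutive_le_of_injOn
    (htri : ∀ i j k, i ≠ j → j ≠ k → i ≠ k → A i j + A j k ≤ 1 + A i k)
    (g : ℕ → ι) (n : ℕ) (hg : Set.InjOn g (Set.Iic (n + 1))) :
    ∑ j ∈ range (n + 1), A (g j) (g (j + 1)) ≤ n + A (g 0) (g (n + 1)) := by
  induction n with
  | zero => simp
  | succ n ih =>
    have hne : ∀ a b, a ≤ n + 2 → b ≤ n + 2 → a ≠ b → g a ≠ g b :=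
      fun a b ha hb hab h => hab (hg (Set.mem_Iic.2 ha) (Set.mem_Iic.2 hb) h)
    have hpath := ih (hg.mono fun j hj => Set.mem_Iic.2 (by simp at hj; omega))
    have hstep := htri (g 0) (g (n + 1)) (g (n + 2))
      (hne _ _ (by omega) (by omega) (by omega)) (hne _ _ (by omega) (by omega) (by omega))
      (hne _ _ (by omega) (by omega) (by omega))
    rw [sum_range_succ]
    push_cast
    linarith

variable [DecidableEq ι] [Fintype ι]

theorem sum_support_le_of_isCycle
    (hskew : ∀ i j, i ≠ j → A j i = -A i j)
    (htri : ∀ i j k, i ≠ j → j ≠ k → i ≠ k → A i j + A j k ≤ 1 + A i k)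
    {c : Equiv.Perm ι} (hc : c.IsCycle) :
    ∑ i ∈ c.support, A i (c i) ≤ #c.support - 2 := by
  obtain ⟨x, hx⟩ := hc.nonempty_support
  have hcyc : c.IsCycleOn (c.support : Set ι) := by
    rw [Equiv.Perm.coe_support_eq_set_support]
    exact hc.isCycleOn
  set g : ℕ → ι := fun j => (c ^ j) x with hg
  obtain ⟨n, hn⟩ : ∃ n, #c.support = n + 2 :=
    ⟨#c.support - 2, by have := hc.two_le_card_support; omega⟩
  have hinj : Set.InjOn g (Set.Iio (n + 2)) := fun a ha b hb hab =>
    ((hcyc.pow_apply_eq_pow_apply hx).1 hab).eq_of_lt_of_lt (hn ▸ ha) (hn ▸ hb)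
  have hsum : ∑ i ∈ c.support, A i (c i) = ∑ j ∈ range (n + 2), A (g j) (g (j + 1)) := by
    refine (sum_nbij g (fun j _ => Equiv.Perm.pow_apply_mem_support.2 hx)
      (fun a ha b hb => hinj (by simpa using ha) (by simpa using hb)) (fun y hy => ?_)
      (fun j _ => by simp only [hg, pow_succ', Equiv.Perm.mul_apply])).symm
    obtain ⟨j, hj, rfl⟩ := hcyc.exists_pow_eq hx hy
    exact ⟨j, by simpa [hn] using hj, rfl⟩
  have hclose : g (n + 2) = g 0 := by
    simpa [hg, ← hn] using hcyc.pow_card_apply hx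
  have hne : g 0 ≠ g (n + 1) := fun h => by
    have := hinj (by simp) (by simp) h; omega
  have hpath := sum_consecutive_le_of_injOn htri g n
    (hinj.mono fun j hj => by simp at hj ⊢; omega)
  rw [hsum, sum_range_succ, hclose, hskew _ _ hne, hn]
  push_cast
  linarith

theorem sum_support_le
    (hskew : ∀ i j, i ≠ j → A j i = -A i j)
    (htri : ∀ i j k, i ≠ j → j ≠ k → i ≠ k → A i j + A j k ≤ 1 + A i k)
    (σ : Equiv.Perm ι) :
    ∑ i ∈ σ.support, A i (σ i) ≤ #σ.support - 2 * (Multiset.card σ.cycleType : ℝ) := by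
  induction σ using Equiv.Perm.cycle_induction_on with
  | base_one => simp
  | base_cycles c hc =>
    simpa [hc.cycleType] using sum_support_le_of_isCycle hskew htri hc
  | induction_disjoint σ τ hd _ hσ hτ =>
    rw [Equiv.Perm.sum_support_mul_of_disjoint hd A, hd.cycleType_mul, hd.support_mul,
      card_union_of_disjoint hd.disjoint_support, Multiset.card_add]
    push_cast
    linarith

theorem sum_apply_perm_le
    (hdiag : ∀ i, A i i = 1)
    (hskew : ∀ i j, i ≠ j → A j i = -A i j)
    (htri : ∀ i j k, i ≠ j → j ≠ k → i ≠ k → A i j + A j k ≤ 1 + A i k)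
    (σ : Equiv.Perm ι) :
    ∑ i, A i (σ i) ≤ Fintype.card ι - 2 * (Multiset.card σ.cycleType : ℝ) := by
  have hfixed : ∑ i ∈ σ.supportᶜ, A i (σ i) = #σ.supportᶜ := by
    rw [sum_congr rfl fun i hi => by rw [Equiv.Perm.notMem_support.1 (mem_compl.1 hi), hdiag]]
    simp
  rw [← sum_add_sum_compl σ.support, hfixed, card_compl,
    Nat.cast_sub (card_le_univ σ.support)]
  linarith [sum_support_le hskew htri σ]

end Matrix

/-- for a matrix with unit diagonal, `a_{ji} = -a_{ij}` off the
diagonal, and `-1 ≤ a_{ij} + a_{jk} + a_{ki} ≤ 1` for pairwise distinct indices,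
every permutation `σ` with `k` nontrivial cycles (that is, `k` is the cardinality
of the cycle type of `σ`) satisfies `Σ_i a_{i,σ(i)} ≤ d - 2k`. -/
theorem permSum_le_of_conditions (d : ℕ) (A : Matrix (Fin d) (Fin d) ℝ)
    (hdiag : ∀ i, A i i = 1)
    (hskew : ∀ i j, i ≠ j → A j i = -A i j)
    (htriple : ∀ i j k, i ≠ j → j ≠ k → i ≠ k →
      -1 ≤ A i j + A j k + A k i ∧ A i j + A j k + A k i ≤ 1)
    (σ : Equiv.Perm (Fin d)) :
    ∑ i, A i (σ i) ≤ (d : ℝ) - 2 * (Multiset.card σ.cycleType : ℝ) := by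
  have htri : ∀ i j k, i ≠ j → j ≠ k → i ≠ k → A i j + A j k ≤ 1 + A i k := by
    intro i j k hij hjk hik
    linarith [(htriple i j k hij hjk hik).2, hskew i k hik]
  simpa using Matrix.sum_apply_perm_le hdiag hskew htri σ
end

section
/- Let d ≥ 2 and let A = (a_{ij}) ∈ ℝ^{d×d} be any matrix. Then there exist permutations ρ and π of [d] and vectors u, v ∈ ℝ^d such that the matrix B = (b_{ij}) defined by b_{ij} := a_{ρ(i),π(j)} + u_i + v_j is max-standard, and moreover tdiam(B) = tdiam(A) and tvol(B) = tvol(A). -/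
open scoped BigOperators

/-! Adding `u i + v j` to the entries adds the constant `∑ u + ∑ v` to every `A|σ`, and permuting
rows by `ρ` and columns by `π` relabels permutations by `σ ↦ π σ ρ⁻¹`; so the tropical determinant
and the largest `A|τ` over `τ ≠ σ₀` move by the same constant and the tropical volume is unchanged.
The difference of two rows changes only by a constant and a relabelling of coordinates, which
leaves `tdist` invariant. Moving an optimal permutation to the diagonal and choosing `u`, `v` to
normalise the first row and column then gives a max-standard matrix. -/

open Equiv

variable {d : ℕ}

theorem tdist_eq_of_sub_eq [NeZero d] {x y x' y' : Fin d → ℝ} (π : Perm (Fin d)) (c : ℝ)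
    (h : ∀ k, x' k - y' k = x (π k) - y (π k) + c) : tdist x' y' = tdist x y := by
  simp only [tdist, h]
  rw [← ciSup_add (Finite.bddAbove_range _), ← ciInf_add (Finite.bddBelow_range _),
    π.iSup_comp (g := fun k => x k - y k), π.iInf_comp (g := fun k => x k - y k)]
  ring

theorem permSum_le_tdet (A : Matrix (Fin d) (Fin d) ℝ) (σ : Perm (Fin d)) :
    permSum A σ ≤ tdet A :=
  le_ciSup (Finite.bddAbove_range _) σ

theorem nonempty_perm_ne (hd : 2 ≤ d) (σ : Perm (Fin d)) :
    Nonempty {τ : Perm (Fin d) // τ ≠ σ} :=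
  haveI : Nontrivial (Fin d) := Fin.nontrivial_iff_two_le.mpr hd
  nonempty_subtype.mpr (exists_ne σ)

theorem iSup_permSum_ne_eq_tdet {A : Matrix (Fin d) (Fin d) ℝ} {σ σ' : Perm (Fin d)}
    (hne : σ' ≠ σ) (hσ' : permSum A σ' = tdet A) :
    ⨆ τ : {τ : Perm (Fin d) // τ ≠ σ}, permSum A τ = tdet A := by
  have : Nonempty {τ : Perm (Fin d) // τ ≠ σ} := ⟨⟨σ', hne⟩⟩
  refine le_antisymm (ciSup_le fun τ => permSum_le_tdet A τ) ?_
  rw [← hσ']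
  exact le_ciSup (f := fun τ : {τ : Perm (Fin d) // τ ≠ σ} => permSum A τ)
    (Finite.bddAbove_range _) ⟨σ', hne⟩

theorem tvolWith_eq_of_permSum_eq_tdet {A : Matrix (Fin d) (Fin d) ℝ} {σ σ' : Perm (Fin d)}
    (hσ : permSum A σ = tdet A) (hσ' : permSum A σ' = tdet A) :
    tvolWith A σ = tvolWith A σ' := by
  rcases eq_or_ne σ σ' with rfl | hne
  · rfl
  · simp only [tvolWith, iSup_permSum_ne_eq_tdet hne.symm hσ', iSup_permSum_ne_eq_tdet hne hσ]

section Equivalent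

variable {A B : Matrix (Fin d) (Fin d) ℝ} {ρ π : Perm (Fin d)} {u v : Fin d → ℝ}

theorem tdiam_eq_of_eq_add [NeZero d] (hB : ∀ i j, B i j = A (ρ i) (π j) + u i + v j) :
    tdiam B = tdiam A := by
  have hrow (i j : Fin d) : tdist (B i) (B j) = tdist (A (ρ i)) (A (ρ j)) :=
    tdist_eq_of_sub_eq π (u i - u j) fun k => by rw [hB, hB]; ring
  simp only [tdiam, hrow]
  exact ρ.iSup_congr fun i => (ρ.iSup_comp (g := fun j => tdist (A (ρ i)) (A j))).symm

theorem permSum_eq_of_eq_add (hB : ∀ i j, B i j = A (ρ i) (π j) + u i + v j)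
    (τ : Perm (Fin d)) :
    permSum B τ = permSum A (π * τ * ρ⁻¹) + (∑ i, u i + ∑ j, v j) := by
  have hrows : ∑ i, A (ρ i) (π (τ i)) = permSum A (π * τ * ρ⁻¹) := by
    rw [permSum, ← Equiv.sum_comp ρ fun i => A i ((π * τ * ρ⁻¹) i)]
    simp [Perm.mul_apply]
  simp only [permSum, hB, Finset.sum_add_distrib, Equiv.sum_comp τ v] at hrows ⊢
  rw [hrows]
  ring

theorem tdet_eq_of_eq_add (hB : ∀ i j, B i j = A (ρ i) (π j) + u i + v j) :
    tdet B = tdet A + (∑ i, u i + ∑ j, v j) := by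
  simp only [tdet, permSum_eq_of_eq_add hB]
  rw [← ciSup_add (Finite.bddAbove_range _)]
  congr 1
  exact ((Equiv.mulLeft π).trans (Equiv.mulRight ρ⁻¹)).iSup_comp (g := permSum A)

theorem tvolWith_eq_of_eq_add (hd : 2 ≤ d) (hB : ∀ i j, B i j = A (ρ i) (π j) + u i + v j)
    (σ : Perm (Fin d)) : tvolWith B σ = tvolWith A (π * σ * ρ⁻¹) := by
  let e : Perm (Perm (Fin d)) := (Equiv.mulLeft π).trans (Equiv.mulRight ρ⁻¹)
  have := nonempty_perm_ne hd σ
  have hsecond : ⨆ τ : {τ : Perm (Fin d) // τ ≠ σ}, permSum B τ =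
      (⨆ τ : {τ : Perm (Fin d) // τ ≠ π * σ * ρ⁻¹}, permSum A τ) + (∑ i, u i + ∑ j, v j) := by
    simp only [permSum_eq_of_eq_add hB]
    rw [← ciSup_add (Finite.bddAbove_range _)]
    congr 1
    exact (e.subtypeEquiv (p := (· ≠ σ)) (q := (· ≠ π * σ * ρ⁻¹))
      fun τ => e.injective.ne_iff.symm).iSup_comp
      (g := fun τ : {τ : Perm (Fin d) // τ ≠ π * σ * ρ⁻¹} => permSum A τ)
  rw [tvolWith, tvolWith, hsecond, tdet_eq_of_eq_add hB]
  ring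

end Equivalent

/-- every square matrix is equivalent to a max-standard matrix,
via row/column permutations and adding constants to rows and columns; this
equivalence preserves the tropical diameter and the tropical volume. -/
theorem exists_maxStandard_equivalent (d : ℕ) [NeZero d] (hd : 2 ≤ d)
    (A : Matrix (Fin d) (Fin d) ℝ) :
    ∃ (B : Matrix (Fin d) (Fin d) ℝ) (ρ π : Equiv.Perm (Fin d)) (u v : Fin d → ℝ),
      (∀ i j, B i j = A (ρ i) (π j) + u i + v j) ∧
      IsMaxStandard B ∧
      tdiam B = tdiam A ∧
      (∀ σ₀ σ₁ : Equiv.Perm (Fin d),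
        permSum A σ₀ = tdet A → permSum B σ₁ = tdet B →
        tvolWith B σ₁ = tvolWith A σ₀) := by
  obtain ⟨σ₀, hσ₀⟩ := Finite.exists_max (permSum A)
  have hσ₀_opt : permSum A σ₀ = tdet A := le_antisymm (permSum_le_tdet A σ₀) (ciSup_le hσ₀)
  let u : Fin d → ℝ := fun i => (if i = 0 then 1 else 0) - A i (σ₀ 0) + A 0 (σ₀ 0)
  let v : Fin d → ℝ := fun j => (if j = 0 then 1 else 0) - 1 - A 0 (σ₀ j)
  let B : Matrix (Fin d) (Fin d) ℝ := Matrix.of fun i j => A i (σ₀ j) + u i + v j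
  have hB : ∀ i j, B i j = A ((1 : Perm (Fin d)) i) (σ₀ j) + u i + v j := fun _ _ => rfl
  refine ⟨B, 1, σ₀, u, v, hB, ⟨?_, fun j => ?_, fun i => ?_⟩, tdiam_eq_of_eq_add hB,
    fun σ σ₁ hσ hσ₁ => ?_⟩
  · rw [permSum_eq_of_eq_add hB, tdet_eq_of_eq_add hB, mul_one, inv_one, mul_one, hσ₀_opt]
  · simp only [B, u, v, Matrix.of_apply, if_true]
    ring
  · simp only [B, u, v, Matrix.of_apply, if_true]
    ring
  · rw [permSum_eq_of_eq_add hB, tdet_eq_of_eq_add hB, add_left_inj] at hσ₁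
    rw [tvolWith_eq_of_eq_add hd hB]
    exact tvolWith_eq_of_permSum_eq_tdet hσ₁ hσ
end

section
/- Let d ≥ 2 and let B = (b_{ij}) ∈ ℝ^{d×d} satisfy b_{ij} ≥ 0 for all i,j, b_{ii} = 0 for all i, b_{ij} + b_{ji} = 2 for all i ≠ j, and the strict inequalities 2 < b_{ij} + b_{jk} + b_{ki} < 4 for all pairwise distinct i,j,k. Then every one of the d(d−1) inequalities defining the weighted digraph polyhedron P(B) = {x ∈ ℝ^d : x_i − x_j ≤ b_{ij} for i ≠ j} is irredundant: for each ordered pair (i,j) with i ≠ j there exists a point x ∈ ℝ^d such that x_i − x_j > b_{ij}, while x_k − x_ℓ ≤ b_{kℓ} holds for every ordered pair (k,ℓ) with k ≠ ℓ and (k,ℓ) ≠ (i,j). -/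
open scoped BigOperators

/-- if `B` has non-negative entries, zero diagonal,
`b_{ij} + b_{ji} = 2` off the diagonal, and strict inequalities
`2 < b_{ij} + b_{jk} + b_{ki} < 4` for pairwise distinct `i,j,k`, then every
defining inequality of the weighted digraph polyhedron
`P(B) = {x : x_i - x_j ≤ b_{ij} for i ≠ j}` is irredundant. -/
theorem weightedDigraphPolyhedron_facets_irredundant (d : ℕ) (hd : 2 ≤ d)
    (B : Matrix (Fin d) (Fin d) ℝ)
    (hnonneg : ∀ i j, 0 ≤ B i j)
    (hdiag : ∀ i, B i i = 0)
    (hskew : ∀ i j, i ≠ j → B i j + B j i = 2)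
    (htriple : ∀ i j k, i ≠ j → j ≠ k → i ≠ k →
      2 < B i j + B j k + B k i ∧ B i j + B j k + B k i < 4) :
    ∀ i j, i ≠ j → ∃ x : Fin d → ℝ,
      B i j < x i - x j ∧
      ∀ k l, k ≠ l → (k, l) ≠ (i, j) → x k - x l ≤ B k l := by
  intro i j hij
  -- triangle inequality: B p q < B p r + B r q for pairwise distinct p q r
  have tri : ∀ p q r : Fin d, p ≠ q → q ≠ r → p ≠ r → B p q < B p r + B r q := by
    intro p q r hpq hqr hpr
    have h1 := (htriple p r q hpr (Ne.symm hqr) hpq).1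
    have h2 := hskew p q hpq
    linarith
  set f : Fin d → ℝ := fun k => if k = i ∨ k = j then 1 else B i k + B k j - B i j with hf
  have hne : (Finset.univ : Finset (Fin d)).Nonempty := ⟨i, Finset.mem_univ i⟩
  have hfpos : ∀ k, 0 < f k := by
    intro k
    by_cases hk : k = i ∨ k = j
    · simp [hf, hk]
    · push_neg at hk
      simp only [hf, if_neg (by tauto : ¬(k = i ∨ k = j))]
      have := tri i j k hij (Ne.symm hk.2) (Ne.symm hk.1)
      linarith
  set m := Finset.univ.inf' hne f with hm
  have hmpos : 0 < m := by
    rw [hm, Finset.lt_inf'_iff]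
    exact fun k _ => hfpos k
  set ε := m / 2 with hε
  have hεpos : 0 < ε := by positivity
  have hεle : ∀ k, ε ≤ f k := by
    intro k
    have := Finset.inf'_le f (Finset.mem_univ k)
    rw [← hm] at this
    linarith
  refine ⟨fun k => if k = i then B i j + ε else B k j, ?_, ?_⟩
  · have hji : j ≠ i := Ne.symm hij
    dsimp only
    rw [if_pos rfl, if_neg hji, hdiag j]
    linarith
  · intro k l hkl hne'
    dsimp only
    by_cases hk : k = i
    · have hl : l ≠ i := fun h => hkl (hk.trans h.symm)
      have hlj : l ≠ j := fun h => hne' (by rw [hk, h])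
      rw [if_pos hk, if_neg hl, hk]
      have := hεle l
      simp only [hf, if_neg (by tauto : ¬(l = i ∨ l = j))] at this
      linarith
    · by_cases hl : l = i
      · rw [if_neg hk, if_pos hl, hl]
        by_cases hkj : k = j
        · have h1 := hskew i j hij
          rw [hkj, hdiag j]
          have h2 := hskew j i (Ne.symm hij)
          linarith
        · have h1 := tri k j i hkj (Ne.symm hij) hk
          linarith
      · rw [if_neg hk, if_neg hl]
        by_cases hlj : l = j
        · rw [hlj, hdiag j]
          linarith
        · by_cases hkj : k = j
          · have h1 := hskew j l (Ne.symm hlj)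
            rw [hkj, hdiag j]
            have h2 := hnonneg l j
            linarith
          · have h1 := tri k j l hkj (Ne.symm hlj) hkl
            linarith
end

section
/- Let d ≥ 1 and let p_1, …, p_m ∈ ℝ^d. Then the d-dimensional Lebesgue volume of the convex hull of {p_1, …, p_m} satisfies vol(conv{p_1,…,p_m}) ≤ Σ_{J ⊆ [m], |J| = d+1} (1/d!)·|det Ā[J]|, where for a (d+1)-element subset J, Ā[J] denotes the (d+1)×(d+1) matrix whose columns are the vectors (1, p_j) ∈ ℝ^{d+1} for j ∈ J. -/
/-!
By Carathéodory's theorem the convex hull of the `p j` is covered by the simplices spanned by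
`(d + 1)`-element subsets of the points, and it is null when there are at most `d` points.
The simplex with vertices `q 0, …, q d` is the image of the ordered simplex
`1 ≥ y 0 ≥ ⋯ ≥ y (d - 1) ≥ 0` under `y ↦ q 0 + ∑ j, y j • (q (j + 1) - q j)`, whose linear part
has the same determinant as `Ā` (subtract from each column of `Ā` its predecessor). The `d!`
coordinate permutations of the ordered simplex are almost everywhere disjoint subsets of the unit
cube, so its volume is at most `1 / d!`.
-/

open MeasureTheory Set
open scoped ENNReal Nat Pointwise

theorem Matrix.det_of_cons_one {R : Type*} [CommRing R] {d : ℕ} (q : Fin (d + 1) → Fin d → R) :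
    (Matrix.of fun i j : Fin (d + 1) => (Fin.cons 1 (q j) : Fin (d + 1) → R) i).det =
      (Matrix.of fun i j : Fin d => q j.succ i - q j.castSucc i).det := by
  let col : Fin (d + 1) → Fin (d + 1) → R :=
    Fin.cons (Fin.cons 1 (q 0)) fun j => Fin.cons 0 (q j.succ - q j.castSucc)
  rw [Matrix.det_eq_of_forall_col_eq_smul_add_pred (B := Matrix.of fun i j => col j i) 1
      (fun i => by simp [col]) (fun i j => by cases i using Fin.cases <;> simp [col]),
    Matrix.det_succ_row_zero, Fin.sum_univ_succ]
  simp [col, Matrix.submatrix]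

theorem Equiv.Perm.eq_of_antitone_comp {ι α : Type*} [LinearOrder ι] [WellFoundedGT ι]
    [PartialOrder α] {y : ι → α} (hy : Function.Injective y) {σ τ : Equiv.Perm ι}
    (hσ : Antitone (y ∘ σ)) (hτ : Antitone (y ∘ τ)) : σ = τ := by
  have hrange : range (y ∘ σ) = range (y ∘ τ) := by
    simp only [range_comp, Equiv.range_eq_univ]
  have := ((hσ.strictAnti_of_injective (hy.comp σ.injective)).range_inj
    (hτ.strictAnti_of_injective (hy.comp τ.injective))).mp hrange
  exact Equiv.ext fun i => hy (congrFun this i)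

theorem ae_injective {ι : Type*} [Fintype ι] (μ : Measure (ι → ℝ)) [μ.IsAddHaarMeasure] :
    ∀ᵐ y ∂μ, Function.Injective y := by
  have hdiag : ∀ i j : ι, i ≠ j → μ {y : ι → ℝ | y i = y j} = 0 := by
    intro i j hij
    classical
    have hker : {y : ι → ℝ | y i = y j} =
        LinearMap.ker ((LinearMap.proj i : (ι → ℝ) →ₗ[ℝ] ℝ) - LinearMap.proj j) := by
      ext y; simp [sub_eq_zero]
    rw [hker]
    refine Measure.addHaar_submodule _ _ fun htop => ?_
    have := htop ▸ Submodule.mem_top (x := (Pi.single i 1 : ι → ℝ))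
    simp [hij.symm] at this
  have hsub : {y : ι → ℝ | ¬Function.Injective y} ⊆ ⋃ (i) (j) (_ : i ≠ j), {y | y i = y j} := by
    intro y hy
    simp only [Function.Injective, not_forall] at hy
    obtain ⟨i, j, hyij, hij⟩ := hy
    simp only [mem_iUnion]
    exact ⟨i, j, hij, hyij⟩
  exact measure_mono_null hsub (measure_iUnion_null fun i => measure_iUnion_null fun j =>
    measure_iUnion_null fun hij => hdiag i j hij)

def orderedSimplex (d : ℕ) : Set (Fin d → ℝ) := {y | Antitone y} ∩ Icc 0 1

theorem measurableSet_orderedSimplex (d : ℕ) : MeasurableSet (orderedSimplex d) :=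
  (isClosed_antitone.inter isClosed_Icc).measurableSet

theorem convex_orderedSimplex (d : ℕ) : Convex ℝ (orderedSimplex d) := by
  refine Convex.inter (fun y hy z hz a b ha hb _ i j hij => ?_) (convex_Icc 0 1)
  simp only [Pi.add_apply, Pi.smul_apply, smul_eq_mul]
  gcongr
  exacts [hy hij, hz hij]

theorem volume_orderedSimplex_le (d : ℕ) : volume (orderedSimplex d) ≤ (d ! : ℝ≥0∞)⁻¹ := by
  let A : Equiv.Perm (Fin d) → Set (Fin d → ℝ) := fun σ => {y | y ∘ σ ∈ orderedSimplex d}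
  have hA : ∀ σ, A σ = MeasurableEquiv.piCongrLeft (fun _ => ℝ) σ.symm ⁻¹' orderedSimplex d := by
    intro σ
    ext y
    simp only [A, mem_ofPred_eq, mem_preimage, MeasurableEquiv.coe_piCongrLeft]
    congr!
    ext i
    simp [Equiv.piCongrLeft_apply_eq_cast]
  have hvol : ∀ σ, volume (A σ) = volume (orderedSimplex d) := fun σ => by
    rw [hA, (volume_measurePreserving_piCongrLeft (fun _ => ℝ) σ.symm).measure_preimage_equiv]
  have hmeas : ∀ σ, NullMeasurableSet (A σ) := fun σ => by
    rw [hA]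
    exact ((measurableSet_orderedSimplex d).preimage
      (MeasurableEquiv.measurable _)).nullMeasurableSet
  have hdisj : Pairwise (Function.onFun (AEDisjoint volume) A) := by
    intro σ τ hστ
    refine measure_mono_null ?_ (ae_iff.mp (ae_injective (volume : Measure (Fin d → ℝ))))
    exact fun y hy hinj => hστ (Equiv.Perm.eq_of_antitone_comp hinj hy.1.1 hy.2.1)
  have hcube : ⋃ σ, A σ ⊆ Icc 0 1 := by
    simp only [iUnion_subset_iff]
    intro σ y ⟨_, h0, h1⟩
    exact ⟨fun i => by simpa using h0 (σ.symm i), fun i => by simpa using h1 (σ.symm i)⟩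
  have hsum : (d ! : ℝ≥0∞) * volume (orderedSimplex d) ≤ 1 := calc
    (d ! : ℝ≥0∞) * volume (orderedSimplex d) = ∑ σ, volume (A σ) := by
      simp [hvol, Fintype.card_perm]
    _ = volume (⋃ σ, A σ) := ((measure_iUnion₀ hdisj hmeas).trans (tsum_fintype _)).symm
    _ ≤ volume (Icc (0 : Fin d → ℝ) 1) := measure_mono hcube
    _ = 1 := by simp [Real.volume_Icc_pi]
  exact ENNReal.le_inv_iff_mul_le.mpr (by rwa [mul_comm])

theorem convexHull_range_subset_vadd_image_orderedSimplex {d : ℕ} (q : Fin (d + 1) → Fin d → ℝ) :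
    convexHull ℝ (range q) ⊆ q 0 +ᵥ
      Matrix.toLin' (Matrix.of fun i j => q j.succ i - q j.castSucc i) '' orderedSimplex d := by
  set L := Matrix.toLin' (Matrix.of fun i j : Fin d => q j.succ i - q j.castSucc i)
  let v : Fin (d + 1) → Fin d → ℝ := fun k j => if j.castSucc < k then 1 else 0
  have hv_mem : ∀ k, v k ∈ orderedSimplex d := by
    refine fun k => ⟨fun j j' hjj' => ?_, fun j => ?_, fun j => ?_⟩ <;> simp only [v] <;>
      split_ifs <;> norm_num
    exact ‹¬_› ((Fin.castSucc_le_castSucc_iff.mpr hjj').trans_lt ‹_›)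
  have hv_succ : ∀ i : Fin d, v i.succ = v i.castSucc + Pi.single i 1 := by
    intro i
    ext j
    simp only [v, Pi.add_apply, Pi.single_apply, Fin.castSucc_lt_succ_iff,
      Fin.castSucc_lt_castSucc_iff]
    rcases lt_trichotomy j i with h | rfl | h
    · simp [h, h.le, h.ne]
    · simp
    · simp [h.not_ge, h.asymm, h.ne']
  have hv : ∀ k, q 0 + L (v k) = q k := by
    intro k
    induction k using Fin.induction with
    | zero =>
      have hv_zero : v 0 = 0 := by ext; simp [v]
      simp [hv_zero]
    | succ i ih =>
      rw [hv_succ, map_add, ← add_assoc, ih]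
      ext r
      simp [L]
  refine convexHull_min ?_ (((convex_orderedSimplex d).linear_image L).translate (q 0))
  rintro _ ⟨k, rfl⟩
  exact Set.mem_vadd_set.mpr ⟨L (v k), mem_image_of_mem L (hv_mem k), by rw [vadd_eq_add, hv k]⟩

theorem volume_convexHull_simplex_le {d : ℕ} (q : Fin (d + 1) → Fin d → ℝ) :
    volume (convexHull ℝ (range q)) ≤ ENNReal.ofReal (1 / (d ! : ℝ) *
      |(Matrix.of fun i j : Fin (d + 1) => (Fin.cons 1 (q j) : Fin (d + 1) → ℝ) i).det|) := by
  set D := Matrix.of fun i j : Fin d => q j.succ i - q j.castSucc i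
  calc volume (convexHull ℝ (range q))
      ≤ volume (q 0 +ᵥ Matrix.toLin' D '' orderedSimplex d) :=
        measure_mono (convexHull_range_subset_vadd_image_orderedSimplex q)
    _ = ENNReal.ofReal |D.det| * volume (orderedSimplex d) := by
        rw [measure_vadd, Measure.addHaar_image_linearMap, LinearMap.det_toLin']
    _ ≤ ENNReal.ofReal |D.det| * (d ! : ℝ≥0∞)⁻¹ := by
        gcongr
        exact volume_orderedSimplex_le d
    _ = _ := by
        rw [Matrix.det_of_cons_one, ENNReal.ofReal_mul (by positivity), mul_comm, one_div,
          ENNReal.ofReal_inv_of_pos (by positivity), ENNReal.ofReal_natCast]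

theorem convexHull_range_subset_iUnion_powersetCard {𝕜 ι E : Type*} [Field 𝕜] [LinearOrder 𝕜]
    [IsStrictOrderedRing 𝕜] [Fintype ι] [AddCommGroup E] [Module 𝕜 E] [FiniteDimensional 𝕜 E]
    (p : ι → E) {n : ℕ} (hn : Module.finrank 𝕜 E + 1 ≤ n) (hnι : n ≤ Fintype.card ι) :
    convexHull 𝕜 (range p) ⊆
      ⋃ J ∈ (Finset.univ : Finset ι).powersetCard n, convexHull 𝕜 (p '' J) := by
  classical
  rw [convexHull_eq_union]
  simp only [iUnion_subset_iff]
  intro t ht hind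
  obtain ⟨u, -, hinj, rfl⟩ :=
    Finset.exists_subset_injOn_image_eq_of_surjOn univ t (by simpa [SurjOn] using ht)
  have hu : u.card ≤ n := calc
    u.card = Fintype.card (u.image p) := by rw [Fintype.card_coe, Finset.card_image_of_injOn hinj]
    _ ≤ Module.finrank 𝕜 (vectorSpan 𝕜 (range ((↑) : u.image p → E))) + 1 :=
        hind.card_le_finrank_succ
    _ ≤ n := by grw [Submodule.finrank_le, hn]
  obtain ⟨J, huJ, -, hJ⟩ := Finset.exists_subsuperset_card_eq (Finset.subset_univ u) hu (by simpa)
  refine subset_biUnion_of_mem (u := fun J : Finset ι => convexHull 𝕜 (p '' J))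
    (Finset.mem_powersetCard.mpr ⟨Finset.subset_univ J, hJ⟩) |>.trans' (convexHull_mono ?_)
  simpa using image_mono (f := p) (Finset.coe_subset.mpr huJ)

theorem addHaar_convexHull_range_eq_zero {ι E : Type*} [Fintype ι] [NormedAddCommGroup E]
    [NormedSpace ℝ E] [MeasurableSpace E] [BorelSpace E] [FiniteDimensional ℝ E] (μ : Measure E)
    [μ.IsAddHaarMeasure] (p : ι → E) (hι : Fintype.card ι ≤ Module.finrank ℝ E) :
    μ (convexHull ℝ (range p)) = 0 := by
  cases isEmpty_or_nonempty ι
  · simp [range_eq_empty]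
  refine measure_mono_null (convexHull_subset_affineSpan _)
    (Measure.addHaar_affineSubspace μ _ fun htop => ?_)
  have := finrank_vectorSpan_range_add_one_le ℝ p
  rw [← direction_affineSpan, htop, AffineSubspace.direction_top, finrank_top] at this
  omega

theorem volume_convexHull_le_sum_simplices_general (d m : ℕ)
    (p : Fin m → (Fin d → ℝ)) :
    MeasureTheory.volume (convexHull ℝ (Set.range p)) ≤
      ENNReal.ofReal
        (∑ J ∈ ((Finset.univ : Finset (Fin m)).powersetCard (d + 1)).attach,
          (1 / (Nat.factorial d : ℝ)) *
            |Matrix.det (Matrix.of fun i j : Fin (d + 1) =>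
              Fin.cons (1 : ℝ)
                (p ((J.1.orderIsoOfFin
                  ((Finset.mem_powersetCard.mp J.2).2) j : Fin m))) i)|) := by
  rcases lt_or_ge m (d + 1) with hm | hm
  · rw [addHaar_convexHull_range_eq_zero volume p (by simpa [Nat.lt_succ_iff] using hm)]
    exact zero_le
  set S := (Finset.univ : Finset (Fin m)).powersetCard (d + 1)
  have hvertices : ∀ J : S, p '' J.1 =
      range fun j => p (J.1.orderIsoOfFin (Finset.mem_powersetCard.mp J.2).2 j) := by
    intro J
    simp_rw [Finset.coe_orderIsoOfFin_apply]
    rw [range_comp', Finset.range_orderEmbOfFin]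
  rw [ENNReal.ofReal_sum_of_nonneg fun J _ => by positivity]
  calc volume (convexHull ℝ (range p))
      ≤ volume (⋃ J ∈ S, convexHull ℝ (p '' J)) :=
        measure_mono (convexHull_range_subset_iUnion_powersetCard p (by simp) (by simpa))
    _ ≤ ∑ J ∈ S, volume (convexHull ℝ (p '' J)) := measure_biUnion_finset_le _ _
    _ = ∑ J ∈ S.attach, volume (convexHull ℝ (p '' J.1)) := (Finset.sum_attach _ _).symm
    _ ≤ _ := Finset.sum_le_sum fun J _ => hvertices J ▸ volume_convexHull_simplex_le _

/-- the Lebesgue volume of the convex hull of `m` points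
`p_1,…,p_m ∈ ℝ^d` is at most the sum, over all `(d+1)`-element subsets `J` of
`[m]`, of `(1/d!)·|det Ā[J]|`, where the columns of `Ā[J]` are the vectors
`(1, p_j)` for `j ∈ J` (listed in increasing order of `j`; the absolute value
of the determinant does not depend on the ordering). -/
theorem volume_convexHull_le_sum_simplices (d m : ℕ) (hd : 1 ≤ d)
    (p : Fin m → (Fin d → ℝ)) :
    MeasureTheory.volume (convexHull ℝ (Set.range p)) ≤
      ENNReal.ofReal
        (∑ J ∈ ((Finset.univ : Finset (Fin m)).powersetCard (d + 1)).attach,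
          (1 / (Nat.factorial d : ℝ)) *
            |Matrix.det (Matrix.of fun i j : Fin (d + 1) =>
              Fin.cons (1 : ℝ)
                (p ((J.1.orderIsoOfFin
                  ((Finset.mem_powersetCard.mp J.2).2) j : Fin m))) i)|) :=
  volume_convexHull_le_sum_simplices_general d m p
end

section
/- Let n ≥ 1, let A = (a_{ij}) ∈ ℝ^{n×n}, let T := max_{σ ∈ Sym(n)} Σ_{i∈[n]} a_{i,σ(i)} be the max-tropical determinant of A, let σ₀ be a permutation attaining T, and let N ∈ ℝ with N ≥ n!. For t > 1 define the matrix M(t) ∈ ℝ^{n×n} by M(t)_{ij} := N·t^{a_{ij}} if j = σ₀(i) and M(t)_{ij} := t^{a_{ij}} otherwise, where t^a := exp(a·log t). Then det M(t) ≠ 0 for all sufficiently large t, and log|det M(t)| / log t tends to T as t → ∞. -/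
open scoped BigOperators

/-- for the lift `M(t)` of the matrix `A`, whose entries are
`N·t^{a_{ij}}` on the graph of a permutation `σ₀` attaining the max-tropical
determinant `T` and `t^{a_{ij}}` elsewhere (with `N ≥ n!`), the determinant of
`M(t)` is eventually nonzero and `log|det M(t)| / log t → T` as `t → ∞`. -/
theorem det_lift_tendsto_tropical_det (n : ℕ) (hn : 1 ≤ n)
    (A : Matrix (Fin n) (Fin n) ℝ) (T : ℝ)
    (hT : T = Finset.univ.sup' Finset.univ_nonempty
      (fun σ : Equiv.Perm (Fin n) => ∑ i, A i (σ i)))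
    (σ₀ : Equiv.Perm (Fin n)) (hσ₀ : ∑ i, A i (σ₀ i) = T)
    (N : ℝ) (hN : (Nat.factorial n : ℝ) ≤ N)
    (M : ℝ → Matrix (Fin n) (Fin n) ℝ)
    (hM : ∀ t, 1 < t → ∀ i j, M t i j =
      if j = σ₀ i then N * Real.exp (A i j * Real.log t)
      else Real.exp (A i j * Real.log t)) :
    (∃ t₀ : ℝ, ∀ t, t₀ ≤ t → (M t).det ≠ 0) ∧
    Filter.Tendsto (fun t => Real.log |(M t).det| / Real.log t)
      Filter.atTop (nhds T) := by
  have hfac1 : (1:ℝ) ≤ (n.factorial : ℝ) := by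
    exact_mod_cast Nat.one_le_iff_ne_zero.mpr n.factorial_ne_zero
  have hN1 : (1:ℝ) ≤ N := hfac1.trans hN
  set C : ℝ := (n.factorial : ℝ) * N ^ n with hCdef
  have hC1 : (1:ℝ) ≤ C := by
    have : (1:ℝ) ≤ N ^ n := one_le_pow₀ hN1
    nlinarith
  have hsum_le : ∀ σ : Equiv.Perm (Fin n), ∑ i, A i (σ i) ≤ T := by
    intro σ; rw [hT]
    exact Finset.le_sup' (fun σ : Equiv.Perm (Fin n) => ∑ i, A i (σ i))
      (Finset.mem_univ σ)
  -- key two-sided bound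
  have key : ∀ t : ℝ, 1 < t →
      Real.exp (T * Real.log t) ≤ |(M t).det| ∧
      |(M t).det| ≤ C * Real.exp (T * Real.log t) := by
    intro t ht
    set L := Real.log t with hLdef
    have hL : 0 < L := Real.log_pos ht
    set E := Real.exp (T * L) with hEdef
    have hE : 0 < E := Real.exp_pos _
    set P : Equiv.Perm (Fin n) → ℝ := fun σ => ∏ i, M t i (σ i) with hPdef
    set Q : Equiv.Perm (Fin n) → ℝ :=
      fun σ => ∏ i, (if σ i = σ₀ i then N else 1) with hQdef
    have hentry : ∀ (σ : Equiv.Perm (Fin n)) (i : Fin n),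
        M t i (σ i) = (if σ i = σ₀ i then N else 1) * Real.exp (A i (σ i) * L) := by
      intro σ i
      rw [hM t ht]
      split_ifs with h
      · rfl
      · rw [one_mul]
    have hPeq : ∀ σ : Equiv.Perm (Fin n),
        P σ = Q σ * Real.exp ((∑ i, A i (σ i)) * L) := by
      intro σ
      calc P σ = ∏ i, ((if σ i = σ₀ i then N else 1) * Real.exp (A i (σ i) * L)) :=
            Finset.prod_congr rfl (fun i _ => hentry σ i)
        _ = Q σ * ∏ i, Real.exp (A i (σ i) * L) := Finset.prod_mul_distrib
        _ = Q σ * Real.exp (∑ i, A i (σ i) * L) := by rw [Real.exp_sum]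
        _ = Q σ * Real.exp ((∑ i, A i (σ i)) * L) := by rw [Finset.sum_mul]
    have hexp_le : ∀ σ : Equiv.Perm (Fin n),
        Real.exp ((∑ i, A i (σ i)) * L) ≤ E := by
      intro σ
      exact Real.exp_le_exp.mpr (mul_le_mul_of_nonneg_right (hsum_le σ) hL.le)
    have hQnonneg : ∀ σ, 0 ≤ Q σ := by
      intro σ
      apply Finset.prod_nonneg
      intro i _
      split_ifs <;> linarith
    have hQle : ∀ σ, Q σ ≤ N ^ n := by
      intro σ
      calc Q σ ≤ ∏ _i : Fin n, N := by
            apply Finset.prod_le_prod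
            · intro i _; split_ifs <;> linarith
            · intro i _; split_ifs <;> linarith
        _ = N ^ n := by
            rw [Finset.prod_const, Finset.card_univ, Fintype.card_fin]
    have hPle : ∀ σ, P σ ≤ N ^ n * E := by
      intro σ
      rw [hPeq σ]
      exact mul_le_mul (hQle σ) (hexp_le σ) (Real.exp_pos _).le
        (by positivity)
    have hPnonneg : ∀ σ, 0 ≤ P σ := by
      intro σ; rw [hPeq σ]; exact mul_nonneg (hQnonneg σ) (Real.exp_pos _).le
    have hQne : ∀ σ : Equiv.Perm (Fin n), σ ≠ σ₀ → Q σ ≤ N ^ (n - 1) := by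
      intro σ hσ
      obtain ⟨i₀, hi₀⟩ : ∃ i, σ i ≠ σ₀ i := by
        by_contra h
        push_neg at h
        exact hσ (Equiv.ext h)
      have hsplit := Finset.mul_prod_erase Finset.univ
        (fun i => (if σ i = σ₀ i then N else 1)) (Finset.mem_univ i₀)
      have hcard : (Finset.univ.erase i₀).card = n - 1 := by
        rw [Finset.card_erase_of_mem (Finset.mem_univ i₀), Finset.card_univ,
          Fintype.card_fin]
      calc Q σ = (if σ i₀ = σ₀ i₀ then N else 1) *
            ∏ i ∈ Finset.univ.erase i₀, (if σ i = σ₀ i then N else 1) := hsplit.symm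
        _ = ∏ i ∈ Finset.univ.erase i₀, (if σ i = σ₀ i then N else 1) := by
            rw [if_neg hi₀, one_mul]
        _ ≤ ∏ _i ∈ Finset.univ.erase i₀, N := by
            apply Finset.prod_le_prod
            · intro i _; split_ifs <;> linarith
            · intro i _; split_ifs <;> linarith
        _ = N ^ (n - 1) := by rw [Finset.prod_const, hcard]
    have hPne : ∀ σ : Equiv.Perm (Fin n), σ ≠ σ₀ → P σ ≤ N ^ (n - 1) * E := by
      intro σ hσ
      rw [hPeq σ]
      exact mul_le_mul (hQne σ hσ) (hexp_le σ) (Real.exp_pos _).le (by positivity)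
    have hP0 : P σ₀ = N ^ n * E := by
      rw [hPeq σ₀, hσ₀]
      congr 1
      rw [hQdef]
      simp
    have habs_sign : ∀ σ : Equiv.Perm (Fin n),
        |((Equiv.Perm.sign σ : ℤ) : ℝ)| = 1 := by
      intro σ
      rcases Int.units_eq_one_or (Equiv.Perm.sign σ) with h | h <;> simp [h]
    have hdet : (M t).det = ∑ σ : Equiv.Perm (Fin n),
        ((Equiv.Perm.sign σ : ℤ) : ℝ) * P σ := by
      rw [← Matrix.det_transpose, Matrix.det_apply']
      rfl
    have habs_term : ∀ σ : Equiv.Perm (Fin n),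
        |((Equiv.Perm.sign σ : ℤ) : ℝ) * P σ| = P σ := by
      intro σ
      rw [abs_mul, habs_sign σ, one_mul, abs_of_nonneg (hPnonneg σ)]
    -- upper bound
    have hcardP : (Finset.univ : Finset (Equiv.Perm (Fin n))).card = n.factorial := by
      rw [Finset.card_univ, Fintype.card_perm, Fintype.card_fin]
    have hupper : |(M t).det| ≤ C * E := by
      calc |(M t).det| ≤ ∑ σ : Equiv.Perm (Fin n),
            |((Equiv.Perm.sign σ : ℤ) : ℝ) * P σ| := by
            rw [hdet]; exact Finset.abs_sum_le_sum_abs _ _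
        _ = ∑ σ : Equiv.Perm (Fin n), P σ :=
            Finset.sum_congr rfl (fun σ _ => habs_term σ)
        _ ≤ ∑ _σ : Equiv.Perm (Fin n), N ^ n * E :=
            Finset.sum_le_sum (fun σ _ => hPle σ)
        _ = (n.factorial : ℝ) * (N ^ n * E) := by
            rw [Finset.sum_const, hcardP, nsmul_eq_mul]
        _ = C * E := by rw [hCdef]; ring
    -- lower bound
    have hsplit : (M t).det = ((Equiv.Perm.sign σ₀ : ℤ) : ℝ) * P σ₀ +
        ∑ σ ∈ Finset.univ.erase σ₀, ((Equiv.Perm.sign σ : ℤ) : ℝ) * P σ := by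
      rw [hdet, ← Finset.add_sum_erase _ _ (Finset.mem_univ σ₀)]
    have hcard_erase : ((Finset.univ : Finset (Equiv.Perm (Fin n))).erase σ₀).card
        = n.factorial - 1 := by
      rw [Finset.card_erase_of_mem (Finset.mem_univ σ₀), hcardP]
    have hrest : |∑ σ ∈ Finset.univ.erase σ₀, ((Equiv.Perm.sign σ : ℤ) : ℝ) * P σ|
        ≤ ((n.factorial : ℝ) - 1) * (N ^ (n - 1) * E) := by
      calc |∑ σ ∈ Finset.univ.erase σ₀, ((Equiv.Perm.sign σ : ℤ) : ℝ) * P σ|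
          ≤ ∑ σ ∈ Finset.univ.erase σ₀, |((Equiv.Perm.sign σ : ℤ) : ℝ) * P σ| :=
            Finset.abs_sum_le_sum_abs _ _
        _ = ∑ σ ∈ Finset.univ.erase σ₀, P σ :=
            Finset.sum_congr rfl (fun σ _ => habs_term σ)
        _ ≤ ∑ σ ∈ Finset.univ.erase σ₀, N ^ (n - 1) * E :=
            Finset.sum_le_sum (fun σ hσ => hPne σ (Finset.ne_of_mem_erase hσ))
        _ = ((n.factorial - 1 : ℕ) : ℝ) * (N ^ (n - 1) * E) := by
            rw [Finset.sum_const, hcard_erase, nsmul_eq_mul]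
        _ = ((n.factorial : ℝ) - 1) * (N ^ (n - 1) * E) := by
            congr 1
            have : 1 ≤ n.factorial := Nat.one_le_iff_ne_zero.mpr n.factorial_ne_zero
            push_cast [Nat.cast_sub this]
            ring
    have hpow_split : N ^ n = N ^ (n - 1) * N := by
      rw [← pow_succ, Nat.sub_add_cancel hn]
    have hF1 : (1:ℝ) ≤ N ^ (n - 1) := one_le_pow₀ hN1
    have hlower : E ≤ |(M t).det| := by
      have h1 : |((Equiv.Perm.sign σ₀ : ℤ) : ℝ) * P σ₀| -
          |∑ σ ∈ Finset.univ.erase σ₀, ((Equiv.Perm.sign σ : ℤ) : ℝ) * P σ|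
          ≤ |(M t).det| := by
        rw [hsplit]
        have := abs_sub_abs_le_abs_sub (((Equiv.Perm.sign σ₀ : ℤ) : ℝ) * P σ₀)
          (-(∑ σ ∈ Finset.univ.erase σ₀, ((Equiv.Perm.sign σ : ℤ) : ℝ) * P σ))
        rw [abs_neg, sub_neg_eq_add] at this
        exact this
      rw [habs_term σ₀, hP0] at h1
      have h2 : N ^ n * E - ((n.factorial : ℝ) - 1) * (N ^ (n - 1) * E)
          ≤ |(M t).det| := by linarith [hrest]
      have h3 : E ≤ N ^ n * E - ((n.factorial : ℝ) - 1) * (N ^ (n - 1) * E) := by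
        have hkey : (1:ℝ) ≤ N ^ (n - 1) * (N - ((n.factorial : ℝ) - 1)) := by
          nlinarith [hF1, hN, hfac1]
        have h4 : E * 1 ≤ E * (N ^ (n - 1) * (N - ((n.factorial : ℝ) - 1))) :=
          mul_le_mul_of_nonneg_left hkey hE.le
        rw [hpow_split]
        nlinarith [h4]
      linarith
    exact ⟨hlower, hupper⟩
  constructor
  · refine ⟨2, fun t ht => ?_⟩
    have h1 : (1:ℝ) < t := by linarith
    have := (key t h1).1
    have : 0 < |(M t).det| := lt_of_lt_of_le (Real.exp_pos _) this
    exact abs_pos.mp this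
  · have hC0 : 0 < C := lt_of_lt_of_le one_pos hC1
    have hlow : ∀ᶠ t in Filter.atTop,
        T ≤ Real.log |(M t).det| / Real.log t := by
      filter_upwards [Filter.eventually_gt_atTop (1:ℝ)] with t ht
      have hL : 0 < Real.log t := Real.log_pos ht
      have h := (key t ht).1
      have hlog : T * Real.log t ≤ Real.log |(M t).det| := by
        have := Real.log_le_log (Real.exp_pos _) h
        rwa [Real.log_exp] at this
      rw [le_div_iff₀ hL]
      linarith
    have hup : ∀ᶠ t in Filter.atTop,
        Real.log |(M t).det| / Real.log t ≤ T + Real.log C / Real.log t := by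
      filter_upwards [Filter.eventually_gt_atTop (1:ℝ)] with t ht
      have hL : 0 < Real.log t := Real.log_pos ht
      have hpos : 0 < |(M t).det| :=
        lt_of_lt_of_le (Real.exp_pos _) (key t ht).1
      have h := (key t ht).2
      have hlog : Real.log |(M t).det| ≤ Real.log C + T * Real.log t := by
        have := Real.log_le_log hpos h
        rwa [Real.log_mul (ne_of_gt hC0) (Real.exp_ne_zero _), Real.log_exp] at this
      rw [div_le_iff₀ hL]
      have : (T + Real.log C / Real.log t) * Real.log t
          = T * Real.log t + Real.log C := by
        field_simp
      rw [this]
      linarith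
    have hhtend : Filter.Tendsto (fun t => T + Real.log C / Real.log t)
        Filter.atTop (nhds T) := by
      have : Filter.Tendsto (fun t => Real.log C / Real.log t)
          Filter.atTop (nhds 0) :=
        Filter.Tendsto.div_atTop tendsto_const_nhds Real.tendsto_log_atTop
      have h2 := (tendsto_const_nhds (x := T) (f := Filter.atTop)).add this
      simpa using h2
    exact tendsto_of_tendsto_of_tendsto_of_le_of_le' tendsto_const_nhds hhtend hlow hup
end
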